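/- Let M be a symmetric n×n real matrix with −ΛI ≤ M ≤ ΛI for some Λ ≥ 0, and let δ = (π/2 − arctan Λ)/2. Then cos(δ)I + sin(δ)M ≥ (1/L₂)I and cos(δ)I + sin(δ)M ≤ L₁I, where L₁ = cos δ + Λ sin δ and 1/L₂ = cos δ (tan δ + Λ)/tan(π/2 − δ) > 0. -/

import Mathlib

/-!
With `δ = (π/2 - arctan Λ)/2` one has `cos 2δ = Λ sin 2δ`, i.e. `cos²δ - sin²δ = 2Λ sin δ cos δ`.
This identity turns `cos δ (tan δ + Λ) / tan (π/2 - δ)` into `cos δ - Λ sin δ = 1 / (2 cos δ) > 0`.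
Hence `cos δ • 1 + sin δ • M - (cos δ - Λ sin δ) • 1 = sin δ • (M + Λ • 1)` and
`(cos δ + Λ sin δ) • 1 - (cos δ • 1 + sin δ • M) = sin δ • (Λ • 1 - M)`, both positive semidefinite
because `sin δ > 0`.
-/

open Real

lemma cos_pi_div_two_sub_arctan (Λ : ℝ) :
    cos (π / 2 - arctan Λ) = Λ * sin (π / 2 - arctan Λ) := by
  rw [cos_pi_div_two_sub, sin_pi_div_two_sub, sin_arctan, cos_arctan]
  ring

lemma pi_div_two_sub_arctan_div_two_mem_Ioo (Λ : ℝ) :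
    (π / 2 - arctan Λ) / 2 ∈ Set.Ioo 0 (π / 2) := by
  constructor <;> linarith [arctan_lt_pi_div_two Λ, neg_pi_div_two_lt_arctan Λ]

section

variable {δ Λ : ℝ}

lemma two_mul_cos_mul_cos_sub_mul_sin (h : cos (2 * δ) = Λ * sin (2 * δ)) :
    2 * cos δ * (cos δ - Λ * sin δ) = 1 := by
  rw [cos_two_mul', sin_two_mul] at h
  nlinarith [sin_sq_add_cos_sq δ]

lemma cos_mul_tan_add_div_tan_pi_div_two_sub (h : cos (2 * δ) = Λ * sin (2 * δ))
    (hcos : cos δ ≠ 0) :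
    cos δ * (tan δ + Λ) / tan (π / 2 - δ) = cos δ - Λ * sin δ := by
  rw [cos_two_mul', sin_two_mul] at h
  rw [tan_pi_div_two_sub, tan_eq_sin_div_cos]
  field_simp
  linear_combination -h

end

theorem stmt5_general (n : ℕ) (M : Matrix (Fin n) (Fin n) ℝ)
    (Λ : ℝ)
    (hlow : (M - (-Λ) • (1 : Matrix (Fin n) (Fin n) ℝ)).PosSemidef)
    (hup : (Λ • (1 : Matrix (Fin n) (Fin n) ℝ) - M).PosSemidef)
    (δ : ℝ) (hδ : δ = (Real.pi / 2 - Real.arctan Λ) / 2)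
    (L₁ invL₂ : ℝ) (hL₁ : L₁ = Real.cos δ + Λ * Real.sin δ)
    (hinvL₂ : invL₂ = Real.cos δ * (Real.tan δ + Λ) / Real.tan (Real.pi / 2 - δ)) :
    (Real.cos δ • (1 : Matrix (Fin n) (Fin n) ℝ) + Real.sin δ • M
        - invL₂ • 1).PosSemidef ∧
    (L₁ • (1 : Matrix (Fin n) (Fin n) ℝ)
        - (Real.cos δ • 1 + Real.sin δ • M)).PosSemidef ∧
    0 < invL₂ := by
  obtain ⟨hδ_pos, hδ_lt⟩ : δ ∈ Set.Ioo 0 (π / 2) :=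
    hδ ▸ pi_div_two_sub_arctan_div_two_mem_Ioo Λ
  have hcos : 0 < cos δ := cos_pos_of_mem_Ioo ⟨by linarith, hδ_lt⟩
  have hsin : 0 < sin δ := sin_pos_of_pos_of_lt_pi hδ_pos (by linarith)
  have hkey : cos (2 * δ) = Λ * sin (2 * δ) := by
    rw [hδ, mul_div_cancel₀ _ two_ne_zero]
    exact cos_pi_div_two_sub_arctan Λ
  have hinv : invL₂ = cos δ - Λ * sin δ :=
    hinvL₂ ▸ cos_mul_tan_add_div_tan_pi_div_two_sub hkey hcos.ne'
  refine ⟨?_, ?_, ?_⟩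
  · convert hlow.smul hsin.le using 1
    rw [hinv]
    module
  · convert hup.smul hsin.le using 1
    rw [hL₁]
    module
  · have := two_mul_cos_mul_cos_sub_mul_sin hkey
    rw [hinv]
    nlinarith

theorem stmt5 (n : ℕ) (M : Matrix (Fin n) (Fin n) ℝ) (hM : M.IsSymm)
    (Λ : ℝ) (hΛ : 0 ≤ Λ)
    (hlow : (M - (-Λ) • (1 : Matrix (Fin n) (Fin n) ℝ)).PosSemidef)
    (hup : (Λ • (1 : Matrix (Fin n) (Fin n) ℝ) - M).PosSemidef)
    (δ : ℝ) (hδ : δ = (Real.pi / 2 - Real.arctan Λ) / 2)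
    (L₁ invL₂ : ℝ) (hL₁ : L₁ = Real.cos δ + Λ * Real.sin δ)
    (hinvL₂ : invL₂ = Real.cos δ * (Real.tan δ + Λ) / Real.tan (Real.pi / 2 - δ)) :
    (Real.cos δ • (1 : Matrix (Fin n) (Fin n) ℝ) + Real.sin δ • M
        - invL₂ • 1).PosSemidef ∧
    (L₁ • (1 : Matrix (Fin n) (Fin n) ℝ)
        - (Real.cos δ • 1 + Real.sin δ • M)).PosSemidef ∧
    0 < invL₂ :=
  stmt5_general n M Λ hlow hup δ hδ L₁ invL₂ hL₁ hinvL₂
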